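/- For 0 < c < 1 and n ≥ 3, the vertex set of the nonregularly truncated hypercube TC_n(c) is not 2-point homogeneous: with A_0 = (1,...,1,c), A_1 = (1,...,1,−1,c,−1), A_2 = (1,...,1,−1,−c,1), one has d(A_0,A_1) = d(A_0,A_2) = √(6+2c²), but no isometry of the vertex set fixes A_0 and maps A_1 to A_2. -/
import Mathlib

/-- The vertex set of the nonregularly truncated hypercube `TCₙ(c)`: points of `ℝⁿ` with
exactly one coordinate of absolute value `c`, all other coordinates `±1`, and an even
total number of negative coordinates. -/
def TCc (n : ℕ) (c : ℝ) : Set (EuclideanSpace ℝ (Fin n)) :=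
  {p | ∃ i₀ : Fin n, |p i₀| = c ∧ (∀ i : Fin n, i ≠ i₀ → p i = 1 ∨ p i = -1) ∧
    Even (Finset.univ.filter fun i : Fin n => p i < 0).card}

lemma distsq_eq (n : ℕ) (x y : EuclideanSpace ℝ (Fin n)) :
    dist x y ^ 2 = ∑ i, (x i - y i) ^ 2 := by
  rw [EuclideanSpace.dist_eq, Real.sq_sqrt (by positivity)]
  refine Finset.sum_congr rfl fun i _ => ?_
  rw [Real.dist_eq, sq_abs]

lemma sum2 {n : ℕ} (f : Fin n → ℝ) (a b : Fin n) (hab : a ≠ b)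
    (h : ∀ i, i ≠ a → i ≠ b → f i = 0) : ∑ i, f i = f a + f b := by
  rw [← Finset.sum_subset (Finset.subset_univ {a, b})
    (fun x _ hx => h x (fun h' => hx (by simp [h'])) (fun h' => hx (by simp [h'])))]
  rw [Finset.sum_pair hab]

lemma sum3 {n : ℕ} (f : Fin n → ℝ) (a b d : Fin n) (hab : a ≠ b) (had : a ≠ d) (hbd : b ≠ d)
    (h : ∀ i, i ≠ a → i ≠ b → i ≠ d → f i = 0) : ∑ i, f i = f a + f b + f d := by
  rw [← Finset.sum_subset (Finset.subset_univ {a, b, d})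
    (fun x _ hx => h x (fun h' => hx (by simp [h'])) (fun h' => hx (by simp [h']))
      (fun h' => hx (by simp [h'])))]
  rw [show ({a, b, d} : Finset (Fin n)) = insert a {b, d} from rfl,
    Finset.sum_insert (by simp [hab, had]), Finset.sum_pair hbd]
  ring

lemma key_struct (n : ℕ) (hn : 3 ≤ n) (c : ℝ) (hc0 : 0 < c) (hc1 : c < 1)
    (q : EuclideanSpace ℝ (Fin n)) (hq : q ∈ TCc n c)
    (h0 : ∑ i : Fin n, (q i - (if (i : ℕ) = n - 1 then c else 1)) ^ 2 = 2 * (1 - c) ^ 2) :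
    ∃ j : Fin n, (j : ℕ) ≠ n - 1 ∧ ∀ i : Fin n, q i = if i = j then c else 1 := by
  obtain ⟨i₀, habs, hpm, hpar⟩ := hq
  set i1 : Fin n := ⟨n - 1, by omega⟩ with hi1def
  have hi1val : (i1 : ℕ) = n - 1 := rfl
  have hterm : ∀ i : Fin n, (q i - (if (i : ℕ) = n - 1 then c else 1)) ^ 2 ≤ 2 * (1 - c) ^ 2 :=
    fun i => le_of_le_of_eq (Finset.single_le_sum
      (f := fun i : Fin n => (q i - (if (i : ℕ) = n - 1 then c else 1)) ^ 2)
      (fun j _ => sq_nonneg _) (Finset.mem_univ i)) h0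
  have hstepA : ∀ i : Fin n, i ≠ i₀ → i ≠ i1 → q i = 1 := by
    intro i hii0 hii1
    rcases hpm i hii0 with h | h
    · exact h
    · exfalso
      have hival : ¬ ((i : ℕ) = n - 1) := fun hv => hii1 (Fin.ext hv)
      have ht := hterm i
      rw [if_neg hival, h] at ht
      nlinarith
  by_cases hi0 : i₀ = i1
  · exfalso
    have hq1 : ∀ i, i ≠ i1 → q i = 1 := fun i hi => hstepA i (hi0 ▸ hi) hi
    have hsum : ∑ i : Fin n, (q i - (if (i : ℕ) = n - 1 then c else 1)) ^ 2
        = (q i1 - c) ^ 2 := by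
      rw [Finset.sum_eq_single i1 (fun i _ hi => by
        rw [hq1 i hi, if_neg (fun hv => hi (Fin.ext hv))]; ring)
        (fun h => absurd (Finset.mem_univ i1) h), if_pos hi1val]
    rw [hsum] at h0
    rcases (abs_eq hc0.le).mp habs with hv | hv
    · rw [hi0] at hv; rw [hv] at h0; nlinarith
    · rw [hi0] at hv
      have hfil : (Finset.univ.filter fun i : Fin n => q i < 0) = {i1} := by
        ext i
        simp only [Finset.mem_filter, Finset.mem_univ, true_and, Finset.mem_singleton]
        constructor
        · intro hneg
          by_contra hne
          rw [hq1 i hne] at hneg; linarith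
        · intro h; subst h; rw [hv]; linarith
      rw [hfil] at hpar
      simp at hpar
  · have hqi1 : q i1 = 1 ∨ q i1 = -1 := hpm i1 (Ne.symm hi0)
    have hi0val : ¬ ((i₀ : ℕ) = n - 1) := fun h => hi0 (Fin.ext h)
    have hsum : ∑ i : Fin n, (q i - (if (i : ℕ) = n - 1 then c else 1)) ^ 2
        = (q i₀ - 1) ^ 2 + (q i1 - c) ^ 2 := by
      rw [sum2 _ i₀ i1 hi0 (fun i hia hib => by
        rw [hstepA i hia hib, if_neg (fun hv => hib (Fin.ext hv))]; ring),
        if_neg hi0val, if_pos hi1val]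
    rw [hsum] at h0
    rcases (abs_eq hc0.le).mp habs with hv | hv <;> rcases hqi1 with hw | hw
    · refine ⟨i₀, hi0val, fun i => ?_⟩
      by_cases hi : i = i₀
      · rw [if_pos hi, hi, hv]
      · rw [if_neg hi]
        by_cases hi1 : i = i1
        · rw [hi1, hw]
        · exact hstepA i hi hi1
    · exfalso; rw [hv, hw] at h0; nlinarith
    · exfalso; rw [hv, hw] at h0; nlinarith
    · exfalso; rw [hv, hw] at h0; nlinarith

lemma distA2_ne (n : ℕ) (hn : 3 ≤ n) (c : ℝ) (hc0 : 0 < c) (hc1 : c < 1)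
    (j : Fin n) (hj : (j : ℕ) ≠ n - 1) :
    ∑ i : Fin n, ((if i = j then c else 1) -
      (if (i : ℕ) = n - 3 then -1 else if (i : ℕ) = n - 2 then -c else 1)) ^ 2 ≠ 8 := by
  set i3 : Fin n := ⟨n - 3, by omega⟩ with hi3def
  set i2 : Fin n := ⟨n - 2, by omega⟩ with hi2def
  have h32 : i3 ≠ i2 := by simp only [i3, i2, ne_eq, Fin.mk.injEq]; omega
  have hv3 : (i3 : ℕ) = n - 3 := rfl
  have hv2 : (i2 : ℕ) = n - 2 := rfl
  have hv23 : ¬ ((i2 : ℕ) = n - 3) := by simp only [hv2]; omega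
  by_cases hj3 : j = i3
  · rw [sum2 _ i3 i2 h32 (fun i hia hib => by
      rw [if_neg (by rw [hj3]; exact hia), if_neg (fun hv => hia (Fin.ext hv)),
        if_neg (fun hv => hib (Fin.ext hv))]; ring),
      if_pos hj3.symm, if_pos hv3, if_neg (by rw [hj3]; exact Ne.symm h32),
      if_neg hv23, if_pos hv2]
    nlinarith
  · by_cases hj2 : j = i2
    · rw [sum2 _ i3 i2 h32 (fun i hia hib => by
        rw [if_neg (by rw [hj2]; exact hib), if_neg (fun hv => hia (Fin.ext hv)),
          if_neg (fun hv => hib (Fin.ext hv))]; ring),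
        if_neg (fun h => hj3 h.symm), if_pos hv3,
        if_pos hj2.symm, if_neg hv23, if_pos hv2]
      nlinarith
    · have hjv3 : ¬ ((j : ℕ) = n - 3) := fun h => hj3 (Fin.ext h)
      have hjv2 : ¬ ((j : ℕ) = n - 2) := fun h => hj2 (Fin.ext h)
      rw [sum3 _ j i3 i2 hj3 hj2 h32 (fun i hia hib hic => by
        rw [if_neg hia, if_neg (fun hv => hib (Fin.ext hv)),
          if_neg (fun hv => hic (Fin.ext hv))]; ring),
        if_pos rfl, if_neg hjv3, if_neg hjv2,
        if_neg (Ne.symm hj3), if_pos hv3,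
        if_neg (Ne.symm hj2), if_neg hv23, if_pos hv2]
      nlinarith

lemma idx_ne_32 (n : ℕ) (hn : 3 ≤ n) :
    (⟨n - 3, by omega⟩ : Fin n) ≠ ⟨n - 2, by omega⟩ := by
  simp only [ne_eq, Fin.mk.injEq]; omega
lemma idx_ne_31 (n : ℕ) (hn : 3 ≤ n) :
    (⟨n - 3, by omega⟩ : Fin n) ≠ ⟨n - 1, by omega⟩ := by
  simp only [ne_eq, Fin.mk.injEq]; omega
lemma idx_ne_21 (n : ℕ) (hn : 3 ≤ n) :
    (⟨n - 2, by omega⟩ : Fin n) ≠ ⟨n - 1, by omega⟩ := by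
  simp only [ne_eq, Fin.mk.injEq]; omega

lemma sumA0A1 (n : ℕ) (hn : 3 ≤ n) (c : ℝ) :
    ∑ i : Fin n, ((if (i : ℕ) = n - 1 then c else 1) -
      (if (i : ℕ) = n - 3 then -1 else if (i : ℕ) = n - 2 then c
        else if (i : ℕ) = n - 1 then -1 else 1)) ^ 2 = 6 + 2 * c ^ 2 := by
  have h1 : n - 3 ≠ n - 1 := by omega
  have h2 : n - 2 ≠ n - 1 := by omega
  have h3 : n - 3 ≠ n - 2 := by omega
  rw [sum3 _ ⟨n - 3, by omega⟩ ⟨n - 2, by omega⟩ ⟨n - 1, by omega⟩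
    (idx_ne_32 n hn) (idx_ne_31 n hn) (idx_ne_21 n hn)
    (fun i hia hib hic => by
      have ha : ¬ ((i : ℕ) = n - 3) := fun h => hia (Fin.ext h)
      have hb : ¬ ((i : ℕ) = n - 2) := fun h => hib (Fin.ext h)
      have hc : ¬ ((i : ℕ) = n - 1) := fun h => hic (Fin.ext h)
      rw [if_neg hc, if_neg ha, if_neg hb, if_neg hc]; ring)]
  simp only [Fin.val_mk, h1, h2, h3, Ne.symm h1, Ne.symm h2, Ne.symm h3, ite_self, if_false, if_true,
    eq_self_iff_true, ite_true, ite_false]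
  ring

lemma sumA0A2 (n : ℕ) (hn : 3 ≤ n) (c : ℝ) :
    ∑ i : Fin n, ((if (i : ℕ) = n - 1 then c else 1) -
      (if (i : ℕ) = n - 3 then -1 else if (i : ℕ) = n - 2 then -c else 1)) ^ 2
      = 6 + 2 * c ^ 2 := by
  have h1 : n - 3 ≠ n - 1 := by omega
  have h2 : n - 2 ≠ n - 1 := by omega
  have h3 : n - 3 ≠ n - 2 := by omega
  rw [sum3 _ ⟨n - 3, by omega⟩ ⟨n - 2, by omega⟩ ⟨n - 1, by omega⟩
    (idx_ne_32 n hn) (idx_ne_31 n hn) (idx_ne_21 n hn)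
    (fun i hia hib hic => by
      have ha : ¬ ((i : ℕ) = n - 3) := fun h => hia (Fin.ext h)
      have hb : ¬ ((i : ℕ) = n - 2) := fun h => hib (Fin.ext h)
      have hc : ¬ ((i : ℕ) = n - 1) := fun h => hic (Fin.ext h)
      rw [if_neg hc, if_neg ha, if_neg hb]; ring)]
  simp only [Fin.val_mk, h1, h2, h3, Ne.symm h1, Ne.symm h2, Ne.symm h3, ite_self, if_false, if_true,
    eq_self_iff_true, ite_true, ite_false]
  ring

lemma sumBA0 (n : ℕ) (hn : 3 ≤ n) (c : ℝ) :
    ∑ i : Fin n, ((if i = (⟨n - 2, by omega⟩ : Fin n) then c else 1) -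
      (if (i : ℕ) = n - 1 then c else 1)) ^ 2 = 2 * (1 - c) ^ 2 := by
  have h2 : n - 2 ≠ n - 1 := by omega
  rw [sum2 _ ⟨n - 2, by omega⟩ ⟨n - 1, by omega⟩ (idx_ne_21 n hn)
    (fun i hia hib => by
      rw [if_neg hia, if_neg (fun h => hib (Fin.ext h))]; ring)]
  simp only [Fin.val_mk, Fin.mk.injEq, h2, Ne.symm h2, if_false, if_true,
    eq_self_iff_true, ite_true, ite_false]
  ring

lemma sumBA1 (n : ℕ) (hn : 3 ≤ n) (c : ℝ) :
    ∑ i : Fin n, ((if i = (⟨n - 2, by omega⟩ : Fin n) then c else 1) -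
      (if (i : ℕ) = n - 3 then -1 else if (i : ℕ) = n - 2 then c
        else if (i : ℕ) = n - 1 then -1 else 1)) ^ 2 = 8 := by
  have h1 : n - 3 ≠ n - 1 := by omega
  have h2 : n - 2 ≠ n - 1 := by omega
  have h3 : n - 3 ≠ n - 2 := by omega
  rw [sum3 _ ⟨n - 3, by omega⟩ ⟨n - 2, by omega⟩ ⟨n - 1, by omega⟩
    (idx_ne_32 n hn) (idx_ne_31 n hn) (idx_ne_21 n hn)
    (fun i hia hib hic => by
      have ha : ¬ ((i : ℕ) = n - 3) := fun h => hia (Fin.ext h)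
      have hb : ¬ ((i : ℕ) = n - 2) := fun h => hib (Fin.ext h)
      have hc : ¬ ((i : ℕ) = n - 1) := fun h => hic (Fin.ext h)
      rw [if_neg hib, if_neg ha, if_neg hb, if_neg hc]; ring)]
  simp only [Fin.val_mk, Fin.mk.injEq, h1, h2, h3, Ne.symm h1, Ne.symm h2, Ne.symm h3,
    if_false, if_true, eq_self_iff_true, ite_true, ite_false]
  ring


/-- for `0 < c < 1` and `n ≥ 3`, the vertex set of `TCₙ(c)` is not 2-point
homogeneous: with `A₀ = (1,…,1,c)`, `A₁ = (1,…,1,−1,c,−1)`, `A₂ = (1,…,1,−1,−c,1)` one has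
`d(A₀,A₁) = d(A₀,A₂) = √(6+2c²)`, but no isometry of the vertex set fixes `A₀` and maps
`A₁` to `A₂`. -/
theorem stmt_7 (n : ℕ) (hn : 3 ≤ n) (c : ℝ) (hc0 : 0 < c) (hc1 : c < 1)
    (A₀ A₁ A₂ : EuclideanSpace ℝ (Fin n))
    (hA₀d : A₀ = (WithLp.equiv 2 (Fin n → ℝ)).symm
      (fun i => if (i : ℕ) = n - 1 then c else 1))
    (hA₁d : A₁ = (WithLp.equiv 2 (Fin n → ℝ)).symm
      (fun i => if (i : ℕ) = n - 3 then -1 else if (i : ℕ) = n - 2 then c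
        else if (i : ℕ) = n - 1 then -1 else 1))
    (hA₂d : A₂ = (WithLp.equiv 2 (Fin n → ℝ)).symm
      (fun i => if (i : ℕ) = n - 3 then -1 else if (i : ℕ) = n - 2 then -c else 1))
    (hA₀ : A₀ ∈ TCc n c) (hA₁ : A₁ ∈ TCc n c) (hA₂ : A₂ ∈ TCc n c) :
    dist A₀ A₁ = Real.sqrt (6 + 2 * c ^ 2) ∧
    dist A₀ A₂ = Real.sqrt (6 + 2 * c ^ 2) ∧
    ¬ ∃ e : ↥(TCc n c) ≃ᵢ ↥(TCc n c),
        e ⟨A₀, hA₀⟩ = ⟨A₀, hA₀⟩ ∧ e ⟨A₁, hA₁⟩ = ⟨A₂, hA₂⟩ := by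
  have hA0i : ∀ i : Fin n, A₀ i = if (i : ℕ) = n - 1 then c else 1 := fun i => by
    rw [hA₀d]; rfl
  have hA1i : ∀ i : Fin n, A₁ i = if (i : ℕ) = n - 3 then -1 else if (i : ℕ) = n - 2 then c
      else if (i : ℕ) = n - 1 then -1 else 1 := fun i => by rw [hA₁d]; rfl
  have hA2i : ∀ i : Fin n, A₂ i = if (i : ℕ) = n - 3 then -1
      else if (i : ℕ) = n - 2 then -c else 1 := fun i => by rw [hA₂d]; rfl
  have dsq01 : dist A₀ A₁ ^ 2 = 6 + 2 * c ^ 2 := by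
    rw [distsq_eq, ← sumA0A1 n hn c]
    exact Finset.sum_congr rfl fun i _ => by rw [hA0i, hA1i]
  have dsq02 : dist A₀ A₂ ^ 2 = 6 + 2 * c ^ 2 := by
    rw [distsq_eq, ← sumA0A2 n hn c]
    exact Finset.sum_congr rfl fun i _ => by rw [hA0i, hA2i]
  refine ⟨by rw [← dsq01, Real.sqrt_sq dist_nonneg],
    by rw [← dsq02, Real.sqrt_sq dist_nonneg], ?_⟩
  rintro ⟨e, he0, he1⟩
  set i2 : Fin n := ⟨n - 2, by omega⟩ with hi2def
  set B : EuclideanSpace ℝ (Fin n) :=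
    (WithLp.equiv 2 (Fin n → ℝ)).symm (fun i => if i = i2 then c else 1) with hBdef
  have hBi : ∀ i : Fin n, B i = if i = i2 then c else 1 := fun i => rfl
  have hB : B ∈ TCc n c := by
    refine ⟨i2, ?_, ?_, ?_⟩
    · rw [hBi, if_pos rfl, abs_of_pos hc0]
    · intro i hi; rw [hBi, if_neg hi]; exact Or.inl rfl
    · have hfil : (Finset.univ.filter fun i : Fin n => B i < 0) = ∅ := by
        refine Finset.filter_eq_empty_iff.mpr (fun i _ => ?_)
        rw [hBi]
        by_cases h : i = i2
        · rw [if_pos h]; linarith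
        · rw [if_neg h]; linarith
      rw [hfil]; simp
  have hq : ((e ⟨B, hB⟩ : ↥(TCc n c)) : EuclideanSpace ℝ (Fin n)) ∈ TCc n c :=
    (e ⟨B, hB⟩).2
  set q : EuclideanSpace ℝ (Fin n) := ((e ⟨B, hB⟩ : ↥(TCc n c)) : EuclideanSpace ℝ (Fin n))
    with hqdef
  have hd0 : dist q A₀ = dist B A₀ := by
    have h := e.dist_eq ⟨B, hB⟩ ⟨A₀, hA₀⟩
    rw [he0] at h
    rw [Subtype.dist_eq, Subtype.dist_eq] at h
    exact h
  have hd2 : dist q A₂ = dist B A₁ := by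
    have h := e.dist_eq ⟨B, hB⟩ ⟨A₁, hA₁⟩
    rw [he1] at h
    rw [Subtype.dist_eq, Subtype.dist_eq] at h
    have h' : dist q A₂ = dist B A₁ := h
    exact h'
  have hBA0 : ∑ i : Fin n, (B i - A₀ i) ^ 2 = 2 * (1 - c) ^ 2 := by
    rw [← sumBA0 n hn c]
    exact Finset.sum_congr rfl fun i _ => by rw [hBi, hA0i]
  have hBA1 : ∑ i : Fin n, (B i - A₁ i) ^ 2 = 8 := by
    rw [← sumBA1 n hn c]
    exact Finset.sum_congr rfl fun i _ => by rw [hBi, hA1i]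
  have hsq0 : ∑ i : Fin n, (q i - (if (i : ℕ) = n - 1 then c else 1)) ^ 2
      = 2 * (1 - c) ^ 2 := by
    have h1 : dist q A₀ ^ 2 = dist B A₀ ^ 2 := by rw [hd0]
    rw [distsq_eq, distsq_eq, hBA0] at h1
    rw [← h1]
    exact Finset.sum_congr rfl fun i _ => by rw [hA0i]
  obtain ⟨j, hj, hqj⟩ := key_struct n hn c hc0 hc1 q hq hsq0
  have hsq2 : ∑ i : Fin n, (q i - A₂ i) ^ 2 = 8 := by
    have h1 : dist q A₂ ^ 2 = dist B A₁ ^ 2 := by rw [hd2]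
    rw [distsq_eq, distsq_eq, hBA1] at h1
    exact h1
  apply distA2_ne n hn c hc0 hc1 j hj
  rw [← hsq2]
  exact Finset.sum_congr rfl fun i _ => by rw [hqj, hA2i]
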